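/- (Large Deviation Theorem.) For every integer n ≥ 1, every binary word w ∈ {0,1}^n, and every real κ > 0, there exist a real ν > 0 and a natural number N₀ such that for all N ≥ N₀, the number of words v ∈ {0,1}^N that are κ,w-atypical is at most 2^(N(1−ν)). -/

import Mathlib

/-!
Group the occurrences of `w` by the residue mod `n` of their starting position. The
occurrences starting at `r, r + n, r + 2n, …` lie in disjoint blocks of `v`, so over a uniformly
random word their number is binomial with parameters `m = (N - r) / n` and `p = 2⁻ⁿ`: its
exponential moment factors over the blocks and is bounded through
`1 + p (eᵗ - 1) ≤ exp (p (t + t²))` for `|t| ≤ 1`. By the exponential Markov inequality each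
residue class deviates from its mean by more than `s` for at most `2 · 2ᴺ · exp (p m t² - t s)`
words. An atypical word deviates by more than `κN / (2n)` in some class, and a union bound over
the `n` classes with `t = min κ 1 / 4` leaves `2n · 2ᴺ · exp (-(t² / n) N)` atypical words.
-/

/-- Number of occurrences of the word `w` (of length `n`) in the word `v` (of length `N`):
the number of indices `i` with `0 ≤ i ≤ N - n` such that `v (i+j) = w j` for all `0 ≤ j < n`. -/
noncomputable def occCount (N n : ℕ) (v : Fin N → Bool) (w : Fin n → Bool) : ℕ :=
  Nat.card {i : ℕ // i + n ≤ N ∧ ∀ (j : Fin n) (h : i + (j : ℕ) < N), v ⟨i + (j : ℕ), h⟩ = w j}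

/-- A word `v` of length `N` is `κ,w`-atypical if the frequency of occurrences of `w` in `v`
lies outside the interval `[2⁻ⁿ - κ, 2⁻ⁿ + κ]`. -/
def IsAtypicalWord (n N : ℕ) (κ : ℝ) (w : Fin n → Bool) (v : Fin N → Bool) : Prop :=
  (occCount N n v w : ℝ) / N ∉ Set.Icc ((1 / 2 : ℝ) ^ n - κ) ((1 / 2 : ℝ) ^ n + κ)

open Finset Real

theorem Fintype.sum_comp_of_injective {α β γ M : Type*} [Fintype α] [Fintype β] [Fintype γ]
    [DecidableEq α] [DecidableEq β] [AddCommMonoid M] {e : β → α} (he : Function.Injective e)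
    (F : (β → γ) → M) :
    ∑ v : α → γ, F (v ∘ e) = Fintype.card γ ^ (Fintype.card α - Fintype.card β) • ∑ u, F u := by
  classical
  set ι := Equiv.ofInjective e he
  have hcomp : ∀ g h, (Equiv.piEquivPiSubtypeProd (· ∈ Set.range e) fun _ => γ).symm (g, h) ∘ e
      = g ∘ ι := by
    intro g h; funext b; simp [ι]
  rw [← (Equiv.piEquivPiSubtypeProd (· ∈ Set.range e) fun _ => γ).symm.sum_comp,
    Fintype.sum_prod_type]
  simp only [hcomp, sum_const, card_univ, Fintype.card_fun, Fintype.card_subtype_compl,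
    ← smul_sum, ← Fintype.card_congr ι]
  exact congrArg _ ((Equiv.arrowCongr ι.symm (Equiv.refl γ)).sum_comp F)

theorem Real.one_add_mul_exp_sub_one_le {p t : ℝ} (hp : 0 ≤ p) (ht : |t| ≤ 1) :
    1 + p * (exp t - 1) ≤ exp (p * (t + t ^ 2)) := by
  have hquad : exp t - 1 ≤ t + t ^ 2 := by
    linarith [(abs_le.1 (abs_exp_sub_one_sub_id_le ht)).2]
  calc 1 + p * (exp t - 1) ≤ p * (t + t ^ 2) + 1 := by nlinarith
    _ ≤ exp (p * (t + t ^ 2)) := add_one_le_exp _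

theorem Finset.card_lt_abs_mul_exp_le {α : Type*} [Fintype α] (f : α → ℝ) {s t : ℝ}
    (ht : 0 ≤ t) :
    #{x | s < |f x|} * exp (t * s) ≤ ∑ x, (exp (t * f x) + exp (-t * f x)) := by
  have hpoint : ∀ x, s < |f x| → exp (t * s) ≤ exp (t * f x) + exp (-t * f x) := by
    intro x hx
    rcases abs_cases (f x) with ⟨h, -⟩ | ⟨h, -⟩
    · have : exp (t * s) ≤ exp (t * f x) := exp_le_exp.2 (by rw [← h]; gcongr)
      linarith [exp_pos (-t * f x)]
    · have : exp (t * s) ≤ exp (-t * f x) := exp_le_exp.2 (by nlinarith)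
      linarith [exp_pos (t * f x)]
  calc (#{x | s < |f x|} : ℝ) * exp (t * s) = ∑ x with s < |f x|, exp (t * s) := by
        rw [sum_const, nsmul_eq_mul]
    _ ≤ ∑ x with s < |f x|, (exp (t * f x) + exp (-t * f x)) :=
        sum_le_sum fun x hx => hpoint x (mem_filter.1 hx).2
    _ ≤ ∑ x, (exp (t * f x) + exp (-t * f x)) :=
        sum_le_sum_of_subset_of_nonneg (subset_univ _) fun _ _ _ => by positivity

theorem natCast_sub_div_le (N r n : ℕ) : (((N - r) / n : ℕ) : ℝ) ≤ N / n := by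
  rcases Nat.eq_zero_or_pos n with rfl | hn
  · simp
  rw [le_div_iff₀ (by positivity)]
  exact_mod_cast (Nat.div_mul_le_self _ _).trans (Nat.sub_le _ _)

theorem abs_natCast_sub_div_sub_le {N r n : ℕ} (hr : r < n) :
    |(((N - r) / n : ℕ) : ℝ) - N / n| ≤ 2 := by
  have hn : (0 : ℝ) < n := by exact_mod_cast (r.zero_le.trans_lt hr)
  have hlt : ((N - r : ℕ) : ℝ) < ((N - r) / n : ℕ) * n + n := by
    exact_mod_cast Nat.lt_div_mul_add (r.zero_le.trans_lt hr)
  have hsub : (N : ℝ) - r ≤ ((N - r : ℕ) : ℝ) := by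
    rw [sub_le_iff_le_add]; exact_mod_cast (by omega : N ≤ N - r + r)
  have hrn : (r : ℝ) < n := by exact_mod_cast hr
  rw [abs_le]
  constructor
  · rw [le_sub_iff_add_le, ← sub_eq_neg_add, sub_le_iff_le_add, div_le_iff₀ hn]
    nlinarith
  · linarith [natCast_sub_div_le N r n]

section Blocks

variable {N n : ℕ}

def OccursAt (v : Fin N → Bool) (w : Fin n → Bool) (i : ℕ) : Prop :=
  i + n ≤ N ∧ ∀ (j : Fin n) (h : i + (j : ℕ) < N), v ⟨i + (j : ℕ), h⟩ = w j

instance (v : Fin N → Bool) (w : Fin n → Bool) : DecidablePred (OccursAt v w) := by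
  unfold OccursAt; infer_instance

theorem occCount_eq_card_filter (hn : 0 < n) (v : Fin N → Bool) (w : Fin n → Bool) :
    occCount N n v w = #{i ∈ range N | OccursAt v w i} := by
  have hmem : ∀ i, OccursAt v w i ↔ i ∈ {i ∈ range N | OccursAt v w i} := fun i => by
    simp only [mem_filter, mem_range, iff_and_self]
    exact fun h => by have := h.1; omega
  rw [occCount, ← Fintype.card_coe, ← Nat.card_eq_fintype_card]
  exact Nat.card_congr (Equiv.subtypeEquivRight hmem)

theorem add_mul_add_le_of_lt_div {r j : ℕ} (hj : j < (N - r) / n) : r + j * n + n ≤ N := by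
  have h1 := Nat.mul_le_mul_right n (Nat.succ_le_of_lt hj)
  have h2 := Nat.div_mul_le_self (N - r) n
  have h3 := hj.trans_le (Nat.div_le_self (N - r) n)
  rw [Nat.succ_mul] at h1
  omega

-- The `l`-th letter of the `j`-th block sits at `r + j n + l` (`finProdFinEquiv (j, l) = l + n j`).
def blockPos (r : ℕ) (x : Fin ((N - r) / n) × Fin n) : Fin N :=
  ⟨r + finProdFinEquiv x, by
    have := (finProdFinEquiv x).2
    have := Nat.div_mul_le_self (N - r) n
    omega⟩

theorem blockPos_injective (r : ℕ) : Function.Injective (blockPos (N := N) (n := n) r) :=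
  fun _ _ h => finProdFinEquiv.injective (Fin.ext (by simpa [blockPos] using h))

def block (r : ℕ) (v : Fin N → Bool) : Fin ((N - r) / n) → Fin n → Bool :=
  Function.curry (v ∘ blockPos r)

def blockCount (r : ℕ) (v : Fin N → Bool) (w : Fin n → Bool) : ℕ :=
  #{j | block r v j = w}

theorem occursAt_iff_block_eq (r : ℕ) (v : Fin N → Bool) (w : Fin n → Bool)
    (j : Fin ((N - r) / n)) : OccursAt v w (r + j * n) ↔ block r v j = w := by
  have hend := add_mul_add_le_of_lt_div j.2
  have hpos : ∀ l : Fin n, blockPos r (j, l) = ⟨r + j * n + l, by omega⟩ := fun l => by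
    ext; simp only [blockPos, finProdFinEquiv_apply_val]; ring
  have hblock : ∀ l, block r v j l = v ⟨r + j * n + l, by omega⟩ := fun l => by
    simp only [block, Function.curry_apply, Function.comp_apply, hpos]
  constructor
  · rintro ⟨-, hocc⟩
    funext l
    rw [hblock]
    exact hocc l _
  · rintro rfl
    exact ⟨hend, fun l _ => (hblock l).symm⟩

theorem blockCount_eq_card_filter_mod {r : ℕ} (hr : r < n) (v : Fin N → Bool)
    (w : Fin n → Bool) :
    blockCount r v w = #{i ∈ {i ∈ range N | OccursAt v w i} | i % n = r} := by
  have hn : 0 < n := by omega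
  refine card_bij (fun j _ => r + j * n) ?_ ?_ ?_
  · intro j hj
    have hocc := (occursAt_iff_block_eq r v w j).2 (mem_filter.1 hj).2
    have := hocc.1
    simp only [mem_filter, mem_range]
    exact ⟨⟨by omega, hocc⟩, by rw [Nat.add_mul_mod_self_right, Nat.mod_eq_of_lt hr]⟩
  · intro j₁ _ j₂ _ h
    exact Fin.ext (Nat.eq_of_mul_eq_mul_right hn (by omega))
  · intro i hi
    simp only [mem_filter, mem_range] at hi
    obtain ⟨⟨-, hocc⟩, rfl⟩ := hi
    have hiN := hocc.1
    have hdiv := Nat.mod_add_div' i n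
    have hj : i / n < (N - i % n) / n := by
      refine (Nat.le_div_iff_mul_le hn).2 ?_
      rw [Nat.succ_mul]
      omega
    refine ⟨⟨i / n, hj⟩, ?_, hdiv⟩
    rw [mem_filter, ← occursAt_iff_block_eq, hdiv]
    exact ⟨mem_univ _, hocc⟩

theorem occCount_eq_sum_blockCount (hn : 0 < n) (v : Fin N → Bool) (w : Fin n → Bool) :
    occCount N n v w = ∑ r ∈ range n, blockCount r v w := by
  rw [occCount_eq_card_filter hn,
    card_eq_sum_card_fiberwise fun i _ => mem_range.2 (Nat.mod_lt i hn)]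
  exact sum_congr rfl fun r hr => (blockCount_eq_card_filter_mod (mem_range.1 hr) v w).symm

theorem sum_exp_mul_blockCount (r : ℕ) (w : Fin n → Bool) (t : ℝ) :
    ∑ v : Fin N → Bool, exp (t * blockCount r v w) =
      2 ^ (N - (N - r) / n * n) * (2 ^ n + (exp t - 1)) ^ ((N - r) / n) := by
  set m := (N - r) / n
  set g : (Fin n → Bool) → ℝ := fun b => if b = w then exp t else 1
  have hexp : ∀ u : Fin m × Fin n → Bool,
      exp (t * #{j | Function.curry u j = w}) = ∏ j, g (Function.curry u j) := by
    intro u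
    rw [prod_ite, prod_const, prod_const_one, mul_one, mul_comm, exp_nat_mul]
  have hg : ∑ b, g b = 2 ^ n + (exp t - 1) := by
    have hsplit : ∀ b, g b = 1 + if b = w then exp t - 1 else 0 := fun b => by
      by_cases hb : b = w <;> simp [g, hb]
    simp only [hsplit, sum_add_distrib, sum_ite_eq', mem_univ, if_true, sum_const, card_univ,
      Fintype.card_fun, Fintype.card_bool, Fintype.card_fin, nsmul_eq_mul, mul_one]
    push_cast
    ring
  calc ∑ v : Fin N → Bool, exp (t * blockCount r v w)
      = ∑ v : Fin N → Bool, ∏ j, g (Function.curry (v ∘ blockPos r) j) :=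
        sum_congr rfl fun v _ => hexp _
    _ = 2 ^ (N - m * n) • ∑ u : Fin m × Fin n → Bool, ∏ j, g (Function.curry u j) := by
        simpa using Fintype.sum_comp_of_injective (blockPos_injective r)
          (fun u => ∏ j, g (Function.curry u j))
    _ = 2 ^ (N - m * n) * ∑ c : Fin m → Fin n → Bool, ∏ j, g (c j) := by
        rw [nsmul_eq_mul, ← (Equiv.curry _ _ _).symm.sum_comp]
        simp only [Nat.cast_pow, Nat.cast_ofNat, Equiv.curry_symm_apply, Function.curry_uncurry]
    _ = _ := by rw [← Fintype.sum_pow, hg]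

noncomputable def blockDev (r : ℕ) (v : Fin N → Bool) (w : Fin n → Bool) : ℝ :=
  blockCount r v w - (1 / 2) ^ n * ((N - r) / n : ℕ)

theorem sum_exp_mul_blockDev_le (r : ℕ) (w : Fin n → Bool) {t : ℝ} (ht : |t| ≤ 1) :
    ∑ v : Fin N → Bool, exp (t * blockDev r v w) ≤
      2 ^ N * exp ((1 / 2) ^ n * ((N - r) / n : ℕ) * t ^ 2) := by
  simp only [blockDev]
  set m := (N - r) / n
  set p : ℝ := (1 / 2) ^ n
  have hp : 0 ≤ p := by positivity
  have hpq : p * 2 ^ n = 1 := by rw [← mul_pow]; norm_num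
  have hmn : n * m ≤ N := by
    rw [mul_comm]; exact (Nat.div_mul_le_self _ _).trans (Nat.sub_le _ _)
  have hfactor : exp (-(t * p)) * (2 ^ n + (exp t - 1)) ≤ 2 ^ n * exp (p * t ^ 2) :=
    calc exp (-(t * p)) * (2 ^ n + (exp t - 1))
        = 2 ^ n * (exp (-(t * p)) * (1 + p * (exp t - 1))) := by
          linear_combination (-(exp (-(t * p)) * (exp t - 1))) * hpq
      _ ≤ 2 ^ n * (exp (-(t * p)) * exp (p * (t + t ^ 2))) := by
          gcongr; exact one_add_mul_exp_sub_one_le hp ht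
      _ = 2 ^ n * exp (p * t ^ 2) := by rw [← exp_add]; ring_nf
  have hbase : 0 ≤ exp (-(t * p)) * (2 ^ n + (exp t - 1)) :=
    mul_nonneg (exp_pos _).le (by linarith [one_le_pow₀ (M₀ := ℝ) (n := n) one_le_two, exp_pos t])
  calc ∑ v : Fin N → Bool, exp (t * (blockCount r v w - p * m))
      = exp (-(t * p)) ^ m * ∑ v : Fin N → Bool, exp (t * blockCount r v w) := by
        rw [mul_sum]
        refine sum_congr rfl fun v _ => ?_
        rw [← exp_nat_mul, ← exp_add]
        ring_nf
    _ = 2 ^ (N - m * n) * (exp (-(t * p)) * (2 ^ n + (exp t - 1))) ^ m := by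
        rw [sum_exp_mul_blockCount, mul_pow]; ring
    _ ≤ 2 ^ (N - m * n) * (2 ^ n * exp (p * t ^ 2)) ^ m := by gcongr
    _ = 2 ^ N * exp (p * m * t ^ 2) := by
        rw [mul_pow, ← pow_mul, ← exp_nat_mul, ← mul_assoc, ← pow_add, mul_comm m n,
          Nat.sub_add_cancel hmn]
        ring_nf

theorem card_lt_abs_blockDev_le (r : ℕ) (w : Fin n → Bool) {s t : ℝ} (ht₀ : 0 ≤ t)
    (ht₁ : t ≤ 1) :
    #{v : Fin N → Bool | s < |blockDev r v w|} ≤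
      2 * 2 ^ N * exp ((1 / 2) ^ n * ((N - r) / n : ℕ) * t ^ 2 - t * s) := by
  have hmarkov := card_lt_abs_mul_exp_le
    (fun v : Fin N → Bool => blockDev r v w) ht₀ (s := s)
  have hpos := sum_exp_mul_blockDev_le (N := N) r w (abs_le.2 ⟨by linarith, ht₁⟩)
  have hneg := sum_exp_mul_blockDev_le (N := N) r w (t := -t)
    (by rw [abs_neg]; exact abs_le.2 ⟨by linarith, ht₁⟩)
  rw [neg_sq] at hneg
  rw [sum_add_distrib] at hmarkov
  rw [sub_eq_add_neg, exp_add, exp_neg, ← mul_assoc, ← div_eq_mul_inv, le_div_iff₀ (exp_pos _)]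
  linarith

theorem abs_occCount_sub_le (hn : 0 < n) (v : Fin N → Bool) (w : Fin n → Bool) :
    |(occCount N n v w : ℝ) - (1 / 2) ^ n * N| ≤
      ∑ r ∈ range n, |blockDev r v w| + 2 * n := by
  set p : ℝ := (1 / 2) ^ n
  have hp₀ : 0 ≤ p := by positivity
  have hp₁ : p ≤ 1 := pow_le_one₀ (by norm_num) (by norm_num)
  have hsplit : (occCount N n v w : ℝ) - p * N =
      ∑ r ∈ range n, blockDev r v w +
        ∑ r ∈ range n, p * ((((N - r) / n : ℕ) : ℝ) - N / n) := by
    have hpN : p * N = ∑ r ∈ range n, p * (N / n) := by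
      rw [sum_const, card_range, nsmul_eq_mul]
      field_simp
    rw [occCount_eq_sum_blockCount hn, Nat.cast_sum, hpN, ← sum_sub_distrib, ← sum_add_distrib]
    exact sum_congr rfl fun r _ => by rw [blockDev]; ring
  have hrest : |∑ r ∈ range n, p * ((((N - r) / n : ℕ) : ℝ) - N / n)| ≤ 2 * n := by
    calc _ ≤ ∑ r ∈ range n, |p * ((((N - r) / n : ℕ) : ℝ) - N / n)| := abs_sum_le_sum_abs _ _
      _ ≤ ∑ r ∈ range n, (2 : ℝ) := sum_le_sum fun r hr => by
          rw [abs_mul, abs_of_nonneg hp₀]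
          have := abs_natCast_sub_div_sub_le (N := N) (mem_range.1 hr)
          nlinarith [abs_nonneg ((((N - r) / n : ℕ) : ℝ) - N / n)]
      _ = 2 * n := by rw [sum_const, card_range, nsmul_eq_mul, mul_comm]
  rw [hsplit]
  exact (abs_add_le _ _).trans (add_le_add (abs_sum_le_sum_abs _ _) hrest)

theorem IsAtypicalWord.exists_lt_abs_blockDev {κ s : ℝ} {w : Fin n → Bool}
    {v : Fin N → Bool} (hv : IsAtypicalWord n N κ w v) (hn : 0 < n) (hN : 0 < N)
    (hs : n * s + 2 * n ≤ κ * N) :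
    ∃ r ∈ range n, s < |blockDev r v w| := by
  have hN' : (0 : ℝ) < N := by exact_mod_cast hN
  have hdev : κ * N < |(occCount N n v w : ℝ) - (1 / 2) ^ n * N| := by
    rw [IsAtypicalWord, ← Set.mem_Icc_iff_abs_le, not_le] at hv
    calc κ * N < |(1 / 2) ^ n - (occCount N n v w : ℝ) / N| * N :=
          mul_lt_mul_of_pos_right hv hN'
      _ = |((1 / 2) ^ n - (occCount N n v w : ℝ) / N) * N| := by rw [abs_mul, abs_of_pos hN']
      _ = |(occCount N n v w : ℝ) - (1 / 2) ^ n * N| := by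
          rw [abs_sub_comm]; congr 1; field_simp
  apply exists_lt_of_sum_lt
  rw [sum_const, card_range, nsmul_eq_mul]
  linarith [abs_occCount_sub_le hn v w]

theorem card_isAtypicalWord_le_sum {κ s : ℝ} (hn : 0 < n) (hN : 0 < N) (w : Fin n → Bool)
    (hs : n * s + 2 * n ≤ κ * N) :
    (Nat.card {v : Fin N → Bool // IsAtypicalWord n N κ w v} : ℝ) ≤ ∑ r ∈ range n,
      (#{v : Fin N → Bool | s < |blockDev r v w|} : ℝ) := by
  classical
  have hsub : ({v | IsAtypicalWord n N κ w v} : Finset (Fin N → Bool)) ⊆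
      (range n).biUnion fun r => {v | s < |blockDev r v w|} := fun v hv =>
    mem_biUnion.2 <| ((mem_filter.1 hv).2.exists_lt_abs_blockDev hn hN hs).imp
      fun r ⟨hr, hlt⟩ => ⟨hr, mem_filter.2 ⟨mem_univ _, hlt⟩⟩
  rw [Nat.card_eq_fintype_card, Fintype.card_subtype]
  exact_mod_cast (card_le_card hsub).trans card_biUnion_le

theorem card_isAtypicalWord_le {κ : ℝ} (hn : 0 < n) (hκ : 0 < κ) (w : Fin n → Bool)
    (hN : 4 * n ≤ κ * N) :
    (Nat.card {v : Fin N → Bool // IsAtypicalWord n N κ w v} : ℝ) ≤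
      2 * n * 2 ^ N * exp (-((min κ 1 / 4) ^ 2 / n * N)) := by
  set t := min κ 1 / 4 with ht
  set s := κ * N / (2 * n) with hs
  have hn' : (0 : ℝ) < n := by exact_mod_cast hn
  have ht₀ : 0 ≤ t := by positivity
  have ht₁ : t ≤ 1 := by linarith [min_le_right κ 1]
  have htκ : t ≤ κ / 4 := by linarith [min_le_left κ 1]
  have hN₀ : 0 < N := by
    have : (0 : ℝ) < κ * N := by linarith
    exact_mod_cast pos_of_mul_pos_right this hκ.le
  have hns : n * s + 2 * n ≤ κ * N := by
    have : n * s = κ * N / 2 := by rw [hs]; field_simp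
    linarith
  have hexp : ∀ r, (1 / 2 : ℝ) ^ n * ((N - r) / n : ℕ) * t ^ 2 - t * s ≤ -(t ^ 2 / n * N) := by
    intro r
    have hm : (1 / 2 : ℝ) ^ n * ((N - r) / n : ℕ) ≤ N / n :=
      (mul_le_of_le_one_left (by positivity) (pow_le_one₀ (by norm_num) (by norm_num))).trans
        (natCast_sub_div_le N r n)
    have hsplit : N / n * t ^ 2 - t * s = -(t ^ 2 / n * N) + N / (2 * n) * (4 * t ^ 2 - t * κ) := by
      rw [hs]; field_simp; ring
    have hneg : N / (2 * n) * (4 * t ^ 2 - t * κ) ≤ 0 :=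
      mul_nonpos_of_nonneg_of_nonpos (by positivity) (by nlinarith)
    nlinarith [sq_nonneg t]
  calc (Nat.card {v : Fin N → Bool // IsAtypicalWord n N κ w v} : ℝ)
      ≤ ∑ r ∈ range n,
          (#{v : Fin N → Bool | s < |blockDev r v w|} : ℝ) :=
        card_isAtypicalWord_le_sum hn hN₀ w hns
    _ ≤ ∑ r ∈ range n, 2 * 2 ^ N * exp (-(t ^ 2 / n * N)) := sum_le_sum fun r _ =>
        (card_lt_abs_blockDev_le r w ht₀ ht₁).trans (by gcongr; exact hexp r)
    _ = 2 * n * 2 ^ N * exp (-(t ^ 2 / n * N)) := by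
        rw [sum_const, card_range, nsmul_eq_mul]; ring

end Blocks

/-- Large Deviation Theorem: the number of `κ,w`-atypical words of length `N` is at most
`2 ^ (N (1 - ν))` for some `ν > 0` and all sufficiently large `N`. -/
theorem large_deviations (n : ℕ) (hn : 1 ≤ n) (w : Fin n → Bool) (κ : ℝ) (hκ : 0 < κ) :
    ∃ ν : ℝ, 0 < ν ∧ ∃ N₀ : ℕ, ∀ N : ℕ, N₀ ≤ N →
      (Nat.card {v : Fin N → Bool // IsAtypicalWord n N κ w v} : ℝ) ≤
        2 ^ ((N : ℝ) * (1 - ν)) := by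
  set c : ℝ := (min κ 1 / 4) ^ 2 / n
  have hc : 0 < c := by have := lt_min hκ one_pos; positivity
  have hlarge : ∀ᶠ N : ℕ in Filter.atTop, 4 * n ≤ κ * N ∧ 2 * n ≤ exp (c / 2 * N) :=
    ((tendsto_natCast_atTop_atTop.const_mul_atTop hκ).eventually_ge_atTop _).and
      ((tendsto_exp_atTop.comp
        (tendsto_natCast_atTop_atTop.const_mul_atTop (half_pos hc))).eventually_ge_atTop _)
  obtain ⟨N₀, hN₀⟩ := Filter.eventually_atTop.1 hlarge
  refine ⟨c / (2 * log 2), by positivity, N₀, fun N hN => ?_⟩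
  obtain ⟨hκN, hexp⟩ := hN₀ N hN
  calc (Nat.card {v : Fin N → Bool // IsAtypicalWord n N κ w v} : ℝ)
      ≤ 2 * n * 2 ^ N * exp (-(c * N)) := card_isAtypicalWord_le hn hκ w hκN
    _ ≤ exp (c / 2 * N) * 2 ^ N * exp (-(c * N)) := by gcongr
    _ = 2 ^ ((N : ℝ) * (1 - c / (2 * log 2))) := by
        rw [rpow_def_of_pos two_pos, ← exp_log (pow_pos two_pos N), ← exp_add, ← exp_add,
          log_pow]
        congr 1
        field_simp
        ring
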